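/- Let N be a finite nonempty player set, T ≥ 1, and for each nonempty S ⊆ N let w_S : {1,…,T} → ℝ be a monotone nondecreasing list of realizations, with ν_S = (1/T)·∑_{i=1}^T δ_{w_S(i)} the corresponding discrete uniform measure. Let r : N → ℝ with r_i ≥ 0 for all i and r(N) = 1. Then for every nonempty S ⊆ N, the pushforward of ν_N under the map z ↦ r(S)·z second-order stochastically dominates ν_S if and only if for every k ∈ {1,…,T}, r(S)·∑_{i=1}^k w_N(i) ≥ ∑_{i=1}^k w_S(i). -/

import Mathlib

/-!
The integrated distribution function of the discrete uniform measure on `x₁, …, x_T` is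
`u ↦ (1/T) ∑ᵢ (u - xᵢ)⁺`, so SSD between two such measures is the pointwise inequality
`∑ᵢ (u - aᵢ)⁺ ≤ ∑ᵢ (u - bᵢ)⁺` of convex piecewise linear functions. For sorted realizations
this is equivalent to the partial-sum inequalities: at the kink `u = b_k` the right-hand side
is `∑_{i ≤ k} (b_k - bᵢ)`, and conversely the left-hand side at `u` equals
`∑_{i ∈ s} (u - aᵢ)` for the initial segment `s = {i | aᵢ < u}`. Scaling by `r(S) ≥ 0`
keeps the grand coalition's realizations sorted.
-/

open MeasureTheory ProbabilityTheory
open scoped NNReal ENNReal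

/-- `P` second-order stochastically dominates `Q`. -/
def SSD (P Q : Measure ℝ) : Prop :=
  ∀ u : ℝ, (∫ z in Set.Iic u, (cdf P z - cdf Q z)) ≤ 0

/-- The discrete uniform measure with `T` equiprobable realizations `x 0, …, x (T-1)`. -/
noncomputable def discUnif (T : ℕ) (x : Fin T → ℝ) : Measure ℝ :=
  ((T : ℝ≥0∞))⁻¹ • ∑ i : Fin T, Measure.dirac (x i)

open Set

section PartialSums

open Finset

lemma sum_le_sum_max_zero {ι : Type*} [Fintype ι] (s : Finset ι) (g : ι → ℝ) :
    ∑ i ∈ s, g i ≤ ∑ i, max (g i) 0 :=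
  calc ∑ i ∈ s, g i ≤ ∑ i ∈ s, max (g i) 0 := sum_le_sum fun _ _ => le_max_left _ _
    _ ≤ ∑ i, max (g i) 0 :=
      sum_le_sum_of_subset_of_nonneg (subset_univ s) fun _ _ _ => le_max_right _ _

lemma sum_max_zero_eq_sum_of_nonneg_of_nonpos {ι : Type*} [Fintype ι] {s : Finset ι}
    {g : ι → ℝ} (hs : ∀ i ∈ s, 0 ≤ g i) (hsc : ∀ i ∉ s, g i ≤ 0) :
    ∑ i, max (g i) 0 = ∑ i ∈ s, g i := by
  rw [← sum_subset (subset_univ s) fun i _ hi => max_eq_right (hsc i hi)]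
  exact sum_congr rfl fun i hi => max_eq_left (hs i hi)

variable {ι : Type*} [LinearOrder ι] [LocallyFiniteOrderBot ι]

lemma Finset.eq_Iic_max'_of_isLowerSet {s : Finset ι} (hne : s.Nonempty)
    (hs : IsLowerSet (s : Set ι)) : s = Iic (s.max' hne) := by
  ext i
  rw [mem_Iic]
  exact ⟨fun hi => s.le_max' i hi, fun hi => hs hi (s.max'_mem hne)⟩

variable [Fintype ι]

lemma Monotone.sum_max_sub_eq_sum_Iic {b : ι → ℝ} (hb : Monotone b) (k : ι) :
    ∑ i, max (b k - b i) 0 = ∑ i ∈ Iic k, (b k - b i) :=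
  sum_max_zero_eq_sum_of_nonneg_of_nonpos
    (fun _ hi => sub_nonneg.2 (hb (mem_Iic.1 hi)))
    (fun _ hi => sub_nonpos.2 (hb (not_le.1 (mem_Iic.not.1 hi)).le))

theorem forall_sum_max_sub_le_iff_sum_Iic_le {a b : ι → ℝ} (ha : Monotone a)
    (hb : Monotone b) :
    (∀ u : ℝ, ∑ i, max (u - a i) 0 ≤ ∑ i, max (u - b i) 0) ↔
      ∀ k, ∑ i ∈ Iic k, b i ≤ ∑ i ∈ Iic k, a i := by
  constructor
  · intro h k
    have key : ∑ i ∈ Iic k, (b k - a i) ≤ ∑ i ∈ Iic k, (b k - b i) :=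
      calc ∑ i ∈ Iic k, (b k - a i) ≤ ∑ i, max (b k - a i) 0 := sum_le_sum_max_zero _ _
        _ ≤ ∑ i, max (b k - b i) 0 := h (b k)
        _ = ∑ i ∈ Iic k, (b k - b i) := hb.sum_max_sub_eq_sum_Iic k
    simp only [sum_sub_distrib] at key
    linarith
  · intro h u
    classical
    set s := univ.filter fun i => a i < u
    have hsum : ∑ i ∈ s, b i ≤ ∑ i ∈ s, a i := by
      rcases s.eq_empty_or_nonempty with hempty | hne
      · simp [hempty]
      · have hlower : IsLowerSet (s : Set ι) := fun i j hji hi => by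
          rw [mem_coe, mem_filter] at hi ⊢
          exact ⟨Finset.mem_univ j, (ha hji).trans_lt hi.2⟩
        rw [s.eq_Iic_max'_of_isLowerSet hne hlower]
        exact h _
    calc ∑ i, max (u - a i) 0 = ∑ i ∈ s, (u - a i) :=
          sum_max_zero_eq_sum_of_nonneg_of_nonpos
            (fun i hi => sub_nonneg.2 (mem_filter.1 hi).2.le)
            (fun i hi => sub_nonpos.2 (not_lt.1 fun h' => hi (mem_filter.2 ⟨mem_univ i, h'⟩)))
      _ ≤ ∑ i ∈ s, (u - b i) := by
          simp only [sum_sub_distrib]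
          linarith
      _ ≤ ∑ i, max (u - b i) 0 := sum_le_sum_max_zero _ _

end PartialSums

section DiscreteUniform

variable (T : ℕ) (x : Fin T → ℝ)

lemma discUnif_apply {s : Set ℝ} (hs : MeasurableSet s) :
    discUnif T x s = (T : ℝ≥0∞)⁻¹ * ∑ i, s.indicator 1 (x i) := by
  simp [discUnif, Measure.finsetSum_apply, Measure.dirac_apply' _ hs]

lemma map_discUnif {f : ℝ → ℝ} (hf : Measurable f) :
    (discUnif T x).map f = discUnif T (f ∘ x) := by
  ext s hs
  rw [Measure.map_apply hf hs, discUnif_apply T x (hf hs), discUnif_apply T _ hs]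
  rfl

variable [NeZero T]

instance : IsProbabilityMeasure (discUnif T x) := by
  constructor
  rw [discUnif_apply T x MeasurableSet.univ]
  simp [ENNReal.inv_mul_cancel, NeZero.ne T]

lemma cdf_discUnif :
    ⇑(cdf (discUnif T x)) = fun z => (∑ i, (Ici (x i)).indicator (1 : ℝ → ℝ) z) / T := by
  ext z
  rw [cdf_eq_real, measureReal_def, discUnif_apply T x measurableSet_Iic, ENNReal.toReal_mul,
    ENNReal.toReal_inv, ENNReal.toReal_natCast, div_eq_inv_mul,
    ENNReal.toReal_sum fun i _ => by by_cases h : x i ≤ z <;> simp [h]]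
  congr 1
  refine Finset.sum_congr rfl fun i _ => ?_
  by_cases h : x i ≤ z <;> simp [h]

lemma integrableOn_indicator_Ici_one (a u : ℝ) :
    IntegrableOn ((Ici a).indicator (1 : ℝ → ℝ)) (Iic u) := by
  rw [IntegrableOn, integrable_indicator_iff measurableSet_Ici, IntegrableOn,
    Measure.restrict_restrict measurableSet_Ici, Ici_inter_Iic]
  exact integrableOn_const measure_Icc_lt_top.ne

lemma setIntegral_Iic_indicator_Ici_one (a u : ℝ) :
    ∫ z in Iic u, (Ici a).indicator (1 : ℝ → ℝ) z = max (u - a) 0 := by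
  rw [integral_indicator_one measurableSet_Ici, measureReal_restrict_apply measurableSet_Ici,
    Ici_inter_Iic, Real.volume_real_Icc]

lemma integrableOn_cdf_discUnif (u : ℝ) : IntegrableOn (cdf (discUnif T x)) (Iic u) := by
  rw [cdf_discUnif]
  exact (integrable_finsetSum _ fun i _ => integrableOn_indicator_Ici_one (x i) u).div_const _

lemma setIntegral_Iic_cdf_discUnif (u : ℝ) :
    ∫ z in Iic u, cdf (discUnif T x) z = (∑ i, max (u - x i) 0) / T := by
  rw [cdf_discUnif, integral_div,
    integral_finsetSum _ fun i _ => integrableOn_indicator_Ici_one (x i) u]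
  simp only [setIntegral_Iic_indicator_Ici_one]

theorem ssd_discUnif_iff (a b : Fin T → ℝ) :
    SSD (discUnif T a) (discUnif T b) ↔
      ∀ u : ℝ, ∑ i, max (u - a i) 0 ≤ ∑ i, max (u - b i) 0 := by
  refine forall_congr' fun u => ?_
  rw [integral_sub (integrableOn_cdf_discUnif T a u) (integrableOn_cdf_discUnif T b u),
    setIntegral_Iic_cdf_discUnif, setIntegral_Iic_cdf_discUnif, sub_nonpos,
    div_le_div_iff_of_pos_right (Nat.cast_pos.2 (Nat.pos_of_ne_zero (NeZero.ne T)))]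

end DiscreteUniform

theorem ssd_core_r_discrete_uniform_iff_general {N : Type*} [Fintype N]
    (T : ℕ) (hT : 1 ≤ T)
    (w : Finset N → Fin T → ℝ)
    (hw : ∀ S : Finset N, S.Nonempty → Monotone (w S))
    (r : N → ℝ) (hr : ∀ i, 0 ≤ r i) :
    ∀ S : Finset N, S.Nonempty →
      (SSD ((discUnif T (w Finset.univ)).map (fun z => (∑ i ∈ S, r i) * z))
          (discUnif T (w S)) ↔
        ∀ k : Fin T,
          ∑ i ∈ Finset.Iic k, w S i ≤ (∑ i ∈ S, r i) * ∑ i ∈ Finset.Iic k, w Finset.univ i) := by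
  intro S hS
  have : NeZero T := ⟨Nat.one_le_iff_ne_zero.1 hT⟩
  have hrS : 0 ≤ ∑ i ∈ S, r i := Finset.sum_nonneg fun i _ => hr i
  have hw_univ := (hw _ (hS.mono S.subset_univ)).const_mul hrS
  rw [map_discUnif T _ (measurable_const_mul _), ssd_discUnif_iff]
  exact (forall_sum_max_sub_le_iff_sum_Iic_le hw_univ (hw S hS)).trans
    (by simp only [Finset.mul_sum])

/-- For discretely uniformly distributed coalitional values, a stochastic payoff without
transfer payments SSD-dominates the value of `S` iff all scaled partial sums of the grand
coalition's realizations dominate those of `S`. -/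
theorem ssd_core_r_discrete_uniform_iff {N : Type*} [Fintype N] [DecidableEq N] [Nonempty N]
    (T : ℕ) (hT : 1 ≤ T)
    (w : Finset N → Fin T → ℝ)
    (hw : ∀ S : Finset N, S.Nonempty → Monotone (w S))
    (r : N → ℝ) (hr : ∀ i, 0 ≤ r i) (hrN : ∑ i : N, r i = 1) :
    ∀ S : Finset N, S.Nonempty →
      (SSD ((discUnif T (w Finset.univ)).map (fun z => (∑ i ∈ S, r i) * z))
          (discUnif T (w S)) ↔
        ∀ k : Fin T,
          ∑ i ∈ Finset.Iic k, w S i ≤ (∑ i ∈ S, r i) * ∑ i ∈ Finset.Iic k, w Finset.univ i) :=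
  ssd_core_r_discrete_uniform_iff_general T hT w hw r hr
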